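/- Let n be an odd positive integer. Then the limit A_n = lim_{k→∞} ∫₀^π |cosⁿ x − cosⁿ(kx)| dx (k ranging over the positive integers) exists and equals (8/π) · (n!/(n!!)²) · Σ_{j=0}^{(n−1)/2} ((2j−1)!!/(2j)!!) · (1/(2j+1)). -/

import Mathlib

open Real Filter MeasureTheory Topology

open scoped NNReal Nat

/-!
For `F x y = |cos x ^ n - cos y ^ n|`, the fast variable `y = k x` runs through a full period
`2π` while `x` moves by `2π / k`; as `F` is Lipschitz in `x`, on each such cell the integral of
`F x (k x)` differs from that of the period mean `periodMean F (2π) x` by `O(1 / k²)`, so the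
integrals over `[0, π]` converge to `∫₀^π periodMean F (2π)`.

For odd `n` the function `u = cos ^ n` is decreasing on `[0, π]` with `∫₀^π u = 0`, and splitting
`|u x - u y|` at `y = x` turns the double integral `∫₀^π ∫₀^π |u x - u y|` into
`-4 ∫₀^π x cos x ^ n dx`. An explicit antiderivative gives a two-step reduction formula for this
last integral, and the double-factorial sum is its solution.
-/

noncomputable def periodMean (F : ℝ → ℝ → ℝ) (T x : ℝ) : ℝ :=
  T⁻¹ * ∫ y in 0..T, F x y

section PeriodMean

variable {F : ℝ → ℝ → ℝ} {T : ℝ} {L : ℝ≥0}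

theorem continuous_comp_mul_of_lipschitzWith (hcont : ∀ x, Continuous (F x))
    (hlip : ∀ y, LipschitzWith L (F · y)) (k : ℝ) : Continuous fun x => F x (k * x) :=
  (continuous_prod_of_continuous_lipschitzWith (Function.uncurry F) L hcont hlip).comp
    (continuous_id.prodMk (continuous_const_mul k))

theorem lipschitzWith_periodMean (hT : 0 < T) (hcont : ∀ x, Continuous (F x))
    (hlip : ∀ y, LipschitzWith L (F · y)) : LipschitzWith L (periodMean F T) := by
  refine LipschitzWith.of_dist_le_mul fun x x' => ?_
  have hdiff : ‖∫ y in 0..T, (F x y - F x' y)‖ ≤ L * dist x x' * |T - 0| :=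
    intervalIntegral.norm_integral_le_of_norm_le_const fun y _ => (hlip y).dist_le_mul x x'
  rw [intervalIntegral.integral_sub ((hcont x).intervalIntegrable _ _)
    ((hcont x').intervalIntegrable _ _), sub_zero, abs_of_pos hT] at hdiff
  rw [dist_eq_norm, periodMean, periodMean, ← mul_sub, norm_mul, norm_inv,
    Real.norm_of_nonneg hT.le]
  calc T⁻¹ * ‖(∫ y in 0..T, F x y) - ∫ y in 0..T, F x' y‖
      ≤ T⁻¹ * (L * dist x x' * T) := by gcongr
    _ = L * dist x x' := by field_simp

theorem abs_periodMean_le (hT : 0 < T) {x M : ℝ} (hM : ∀ y, |F x y| ≤ M) :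
    |periodMean F T x| ≤ M := by
  have := intervalIntegral.norm_integral_le_of_norm_le_const (a := 0) (b := T)
    fun y _ => (Real.norm_eq_abs (F x y)).trans_le (hM y)
  rw [sub_zero, abs_of_pos hT, Real.norm_eq_abs] at this
  rw [periodMean, abs_mul, abs_inv, abs_of_pos hT]
  calc T⁻¹ * |∫ y in 0..T, F x y| ≤ T⁻¹ * (M * T) := by gcongr
    _ = M := by field_simp

theorem integral_add_period_eq_mul_periodMean (hT : T ≠ 0)
    (hper : ∀ x, Function.Periodic (F x) T) (x c : ℝ) :
    ∫ y in c..c + T, F x y = T * periodMean F T x := by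
  rw [(hper x).intervalIntegral_add_eq c 0, zero_add, periodMean, mul_inv_cancel_left₀ hT]

theorem abs_integral_sub_periodMean_le_of_period (hT : 0 < T) (hcont : ∀ x, Continuous (F x))
    (hlip : ∀ y, LipschitzWith L (F · y)) (hper : ∀ x, Function.Periodic (F x) T)
    {k : ℝ} (hk : 0 < k) (c : ℝ) :
    |∫ x in c..c + T / k, (F x (k * x) - periodMean F T x)| ≤ 2 * L * (T / k) ^ 2 := by
  set h := T / k with hh
  have hpos : 0 < h := div_pos hT hk
  have hmean := lipschitzWith_periodMean hT hcont hlip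
  have hφ : Continuous fun x => F x (k * x) - periodMean F T x :=
    (continuous_comp_mul_of_lipschitzWith hcont hlip k).sub hmean.continuous
  have hFc : Continuous fun x => F c (k * x) := (hcont c).comp (continuous_const_mul k)
  have hψ : Continuous fun x => F c (k * x) - periodMean F T c := hFc.sub continuous_const
  have hfixed : ∫ x in c..c + h, (F c (k * x) - periodMean F T c) = 0 := by
    rw [intervalIntegral.integral_sub (hFc.intervalIntegrable _ _) intervalIntegrable_const,
      intervalIntegral.integral_comp_mul_left (F c) hk.ne', mul_add, hh, mul_div_cancel₀ _ hk.ne',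
      integral_add_period_eq_mul_periodMean hT.ne' hper,
      intervalIntegral.integral_const, smul_eq_mul]
    ring
  have hpt : ∀ x ∈ Set.uIoc c (c + h),
      ‖(F x (k * x) - periodMean F T x) - (F c (k * x) - periodMean F T c)‖ ≤ 2 * L * h := by
    intro x hx
    rw [Set.uIoc_of_le (by linarith)] at hx
    have hxc : dist x c ≤ h := by
      rw [Real.dist_eq, abs_of_pos (by linarith [hx.1])]; linarith [hx.2]
    calc ‖(F x (k * x) - periodMean F T x) - (F c (k * x) - periodMean F T c)‖
        = ‖(F x (k * x) - F c (k * x)) - (periodMean F T x - periodMean F T c)‖ := by ring_nf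
      _ ≤ L * dist x c + L * dist x c :=
        (norm_sub_le _ _).trans (add_le_add ((hlip _).dist_le_mul x c) (hmean.dist_le_mul x c))
      _ ≤ 2 * L * h := by nlinarith [L.coe_nonneg]
  have hbound := intervalIntegral.norm_integral_le_of_norm_le_const hpt
  rw [intervalIntegral.integral_sub (hφ.intervalIntegrable _ _) (hψ.intervalIntegrable _ _),
    hfixed, sub_zero, add_sub_cancel_left, abs_of_pos hpos, Real.norm_eq_abs] at hbound
  linarith

theorem abs_integral_sub_periodMean_le (hT : 0 < T) (hcont : ∀ x, Continuous (F x))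
    (hlip : ∀ y, LipschitzWith L (F · y)) (hper : ∀ x, Function.Periodic (F x) T)
    {k : ℝ} (hk : 0 < k) {a b M : ℝ} (hab : a ≤ b)
    (hM : ∀ x ∈ Set.Icc a b, ∀ y, |F x y| ≤ M) :
    |∫ x in a..b, (F x (k * x) - periodMean F T x)| ≤ (2 * L * (b - a) + 2 * M) * (T / k) := by
  set h := T / k
  have hpos : 0 < h := div_pos hT hk
  have hφ : Continuous fun x => F x (k * x) - periodMean F T x :=
    (continuous_comp_mul_of_lipschitzWith hcont hlip k).sub
      (lipschitzWith_periodMean hT hcont hlip).continuous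
  set N := ⌊(b - a) / h⌋₊
  have hNle : N * h ≤ b - a :=
    (le_div_iff₀ hpos).1 (Nat.floor_le (div_nonneg (by linarith) hpos.le))
  have hNgt : b - a < (N + 1) * h := (div_lt_iff₀ hpos).1 (Nat.lt_floor_add_one _)
  have hcells :
      |∫ x in a..a + N * h, (F x (k * x) - periodMean F T x)| ≤ N * (2 * L * h ^ 2) := by
    have hsum := intervalIntegral.sum_integral_adjacent_intervals (μ := volume)
      (a := fun i : ℕ => a + i * h) (n := N) fun i _ => hφ.intervalIntegrable _ _
    simp only [Nat.cast_zero, zero_mul, add_zero] at hsum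
    rw [← hsum]
    refine (Finset.abs_sum_le_sum_abs _ _).trans ?_
    calc ∑ i ∈ Finset.range N,
          |∫ x in a + i * h..a + ↑(i + 1) * h, (F x (k * x) - periodMean F T x)|
        ≤ ∑ _i ∈ Finset.range N, 2 * L * h ^ 2 := Finset.sum_le_sum fun i _ => by
          rw [show a + ↑(i + 1) * h = a + i * h + T / k by push_cast; ring]
          exact abs_integral_sub_periodMean_le_of_period hT hcont hlip hper hk _
      _ = N * (2 * L * h ^ 2) := by simp
  have htail : |∫ x in a + N * h..b, (F x (k * x) - periodMean F T x)| ≤ 2 * M * h := by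
    have hbound :
        ∀ x ∈ Set.uIoc (a + N * h) b, ‖F x (k * x) - periodMean F T x‖ ≤ 2 * M := by
      intro x hx
      rw [Set.uIoc_of_le (by linarith)] at hx
      have hx' : x ∈ Set.Icc a b := ⟨by nlinarith [hx.1, N.cast_nonneg (α := ℝ)], hx.2⟩
      calc ‖F x (k * x) - periodMean F T x‖
          ≤ |F x (k * x)| + |periodMean F T x| := abs_sub _ _
        _ ≤ M + M := add_le_add (hM x hx' _) (abs_periodMean_le hT (hM x hx'))
        _ = 2 * M := by ring
    have hM0 : 0 ≤ 2 * M := by linarith [(abs_nonneg _).trans (hM a ⟨le_rfl, hab⟩ 0)]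
    have := intervalIntegral.norm_integral_le_of_norm_le_const hbound
    rw [Real.norm_eq_abs, abs_of_nonneg (show 0 ≤ b - (a + N * h) by linarith)] at this
    exact this.trans (mul_le_mul_of_nonneg_left (by linarith) hM0)
  rw [← intervalIntegral.integral_add_adjacent_intervals (b := a + N * h)
    (hφ.intervalIntegrable _ _) (hφ.intervalIntegrable _ _)]
  have hLh : 0 ≤ 2 * (L : ℝ) * h := by positivity
  have := mul_le_mul_of_nonneg_left hNle hLh
  refine (abs_add_le _ _).trans ?_
  nlinarith

theorem tendsto_integral_comp_mul_of_periodic (hT : 0 < T) (hcont : ∀ x, Continuous (F x))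
    (hlip : ∀ y, LipschitzWith L (F · y)) (hper : ∀ x, Function.Periodic (F x) T) (a b : ℝ) :
    Tendsto (fun k : ℕ => ∫ x in a..b, F x (k * x)) atTop
      (𝓝 (∫ x in a..b, periodMean F T x)) := by
  wlog hab : a ≤ b generalizing a b
  · simpa only [intervalIntegral.integral_symm b a] using (this b a (le_of_not_ge hab)).neg
  obtain ⟨M, hM⟩ :=
    isBounded_iff_forall_norm_le.1 ((hper a).isBounded_of_continuous hT.ne' (hcont a))
  have hbound : ∀ x ∈ Set.Icc a b, ∀ y, |F x y| ≤ M + L * (b - a) := fun x hx y =>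
    calc |F x y| ≤ |F a y| + |F x y - F a y| := by
          linarith [abs_sub_abs_le_abs_sub (F x y) (F a y)]
      _ ≤ M + L * (b - a) := by
        refine add_le_add (hM _ ⟨y, rfl⟩) ((hlip y).dist_le_mul x a |>.trans ?_)
        rw [Real.dist_eq, abs_of_nonneg (by linarith [hx.1])]
        gcongr
        exact hx.2
  have hmean := (lipschitzWith_periodMean hT hcont hlip).continuous
  rw [← tendsto_sub_nhds_zero_iff]
  refine squeeze_zero_norm' ?_
    (tendsto_const_div_atTop_nhds_zero_nat ((2 * L * (b - a) + 2 * (M + L * (b - a))) * T))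
  filter_upwards [eventually_gt_atTop 0] with k hk
  rw [← intervalIntegral.integral_sub
    ((continuous_comp_mul_of_lipschitzWith hcont hlip k).intervalIntegrable _ _)
    (hmean.intervalIntegrable _ _), mul_div_assoc]
  exact abs_integral_sub_periodMean_le hT hcont hlip hper (Nat.cast_pos.2 hk) hab hbound

end PeriodMean

section Antitone

variable {u : ℝ → ℝ} {a b : ℝ}

theorem integral_abs_sub_of_antitoneOn (hu : Continuous u) (hanti : AntitoneOn u (Set.Icc a b))
    {x : ℝ} (hx : x ∈ Set.Icc a b) :
    ∫ y in a..b, |u x - u y| =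
      2 * (∫ y in a..x, u y) - (∫ y in a..b, u y) + (a + b - 2 * x) * u x := by
  have hint : ∀ c d, IntervalIntegrable u volume c d := fun c d => hu.intervalIntegrable c d
  have hleft : ∫ y in a..x, |u x - u y| = ∫ y in a..x, (u y - u x) := by
    refine intervalIntegral.integral_congr fun y hy => ?_
    rw [Set.uIcc_of_le hx.1] at hy
    rw [abs_sub_comm, abs_of_nonneg (sub_nonneg.2 (hanti ⟨hy.1, hy.2.trans hx.2⟩ hx hy.2))]
  have hright : ∫ y in x..b, |u x - u y| = ∫ y in x..b, (u x - u y) := by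
    refine intervalIntegral.integral_congr fun y hy => ?_
    rw [Set.uIcc_of_le hx.2] at hy
    rw [abs_of_nonneg (sub_nonneg.2 (hanti hx ⟨hx.1.trans hy.1, hy.2⟩ hy.1))]
  have habs : Continuous fun y => |u x - u y| := (continuous_const.sub hu).abs
  rw [← intervalIntegral.integral_add_adjacent_intervals (b := x)
      (habs.intervalIntegrable _ _) (habs.intervalIntegrable _ _),
    hleft, hright, intervalIntegral.integral_sub (hint _ _) intervalIntegrable_const,
    intervalIntegral.integral_sub intervalIntegrable_const (hint _ _),
    ← intervalIntegral.integral_interval_sub_left (hint a b) (hint a x)]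
  simp only [intervalIntegral.integral_const, smul_eq_mul]
  ring

theorem integral_integral_abs_sub_of_antitoneOn (hu : Continuous u)
    (hanti : AntitoneOn u (Set.Icc a b)) (hab : a ≤ b) :
    ∫ x in a..b, ∫ y in a..b, |u x - u y| =
      2 * (a + b) * (∫ x in a..b, u x) - 4 * ∫ x in a..b, x * u x := by
  set U : ℝ → ℝ := fun x => ∫ y in a..x, u y
  have hU : ∀ x, HasDerivAt U (u x) x := fun x => (hu.integral_hasStrictDerivAt a x).hasDerivAt
  set G : ℝ → ℝ := fun x => 2 * x * U x - x * U b + (a + b) * U x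
  have hG : ∀ x, HasDerivAt G (2 * U x - U b + (a + b - 2 * x) * u x + 4 * (x * u x)) x := by
    intro x
    have := ((((hasDerivAt_id x).const_mul 2).mul (hU x)).sub
      ((hasDerivAt_id x).mul_const (U b))).add ((hU x).const_mul (a + b))
    exact this.congr_deriv (by simp only [id_eq]; ring)
  have hUc : Continuous U := continuous_iff_continuousAt.2 fun x => (hU x).continuousAt
  have hxu : Continuous fun x => x * u x := by fun_prop
  have hG' : Continuous fun x => 2 * U x - U b + (a + b - 2 * x) * u x + 4 * (x * u x) := by
    fun_prop
  have hinner : ∫ x in a..b, ∫ y in a..b, |u x - u y| =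
      ∫ x in a..b, ((2 * U x - U b + (a + b - 2 * x) * u x + 4 * (x * u x)) - 4 * (x * u x)) := by
    refine intervalIntegral.integral_congr fun x hx => ?_
    rw [Set.uIcc_of_le hab] at hx
    rw [integral_abs_sub_of_antitoneOn hu hanti hx]
    simp only [U]
    ring
  rw [hinner, intervalIntegral.integral_sub (hG'.intervalIntegrable _ _)
      ((hxu.const_mul 4).intervalIntegrable _ _),
    intervalIntegral.integral_eq_sub_of_hasDerivAt (fun x _ => hG x) (hG'.intervalIntegrable _ _),
    intervalIntegral.integral_const_mul]
  simp only [G, U, intervalIntegral.integral_same]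
  ring

end Antitone


theorem lipschitzWith_cos_pow (n : ℕ) : LipschitzWith n fun x => cos x ^ n := by
  refine LipschitzWith.of_dist_le_mul fun x y => ?_
  rw [Real.dist_eq, Real.dist_eq, NNReal.coe_natCast]
  calc |cos x ^ n - cos y ^ n| ≤ |cos x - cos y| * n * max |cos x| |cos y| ^ (n - 1) :=
        abs_pow_sub_pow_le _ _ _
    _ ≤ |x - y| * n * 1 :=
        mul_le_mul (mul_le_mul_of_nonneg_right (abs_cos_sub_cos_le x y) n.cast_nonneg)
          (pow_le_one₀ (le_max_of_le_left (abs_nonneg _))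
            (max_le (abs_cos_le_one x) (abs_cos_le_one y))) (by positivity) (by positivity)
    _ = n * |x - y| := by ring

theorem integral_comp_cos_zero_two_pi {f : ℝ → ℝ} (hf : Continuous f) :
    ∫ y in 0..2 * π, f (cos y) = 2 * ∫ y in 0..π, f (cos y) := by
  have hfc : Continuous fun y => f (cos y) := hf.comp continuous_cos
  have hreflect : ∫ y in π..2 * π, f (cos y) = ∫ y in 0..π, f (cos y) := by
    have := intervalIntegral.integral_comp_sub_left (fun y => f (cos y)) (a := 0) (b := π) (2 * π)
    simp only [cos_two_pi_sub, sub_zero, show 2 * π - π = π by ring] at this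
    exact this.symm
  rw [← intervalIntegral.integral_add_adjacent_intervals (b := π) (hfc.intervalIntegrable _ _)
    (hfc.intervalIntegrable _ _), hreflect, two_mul]

theorem integral_mul_cos_eq_neg_two : ∫ x in 0..π, x * cos x = -2 := by
  have hderiv : ∀ x ∈ Set.uIcc 0 π, HasDerivAt (fun x => x * sin x + cos x) (x * cos x) x :=
    fun x _ => (((hasDerivAt_id x).mul (hasDerivAt_sin x)).add (hasDerivAt_cos x)).congr_deriv
      (by simp only [id_eq]; ring)
  rw [intervalIntegral.integral_eq_sub_of_hasDerivAt hderiv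
    ((continuous_id.mul continuous_cos).intervalIntegrable _ _)]
  norm_num

theorem integral_mul_cos_pow_add_two (n : ℕ) :
    ∫ x in 0..π, x * cos x ^ (n + 2) =
      (n + 1) / (n + 2) * (∫ x in 0..π, x * cos x ^ n) + ((-1) ^ n - 1) / (n + 2) ^ 2 := by
  have hn : (n : ℝ) + 2 ≠ 0 := by positivity
  have hderiv : ∀ x ∈ Set.uIcc 0 π, HasDerivAt
      (fun x => x * cos x ^ (n + 1) * sin x / (n + 2) + cos x ^ (n + 2) / (n + 2) ^ 2)
      (x * cos x ^ (n + 2) - (n + 1) / (n + 2) * (x * cos x ^ n)) x := by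
    intro x _
    have := ((((hasDerivAt_id x).mul ((hasDerivAt_cos x).pow (n + 1))).mul
      (hasDerivAt_sin x)).div_const ((n : ℝ) + 2)).add
      (((hasDerivAt_cos x).pow (n + 2)).div_const (((n : ℝ) + 2) ^ 2))
    refine this.congr_deriv ?_
    have hsin : sin x ^ 2 = 1 - cos x ^ 2 := sin_sq x
    simp only [id_eq, Pi.mul_apply, Pi.pow_apply, Nat.add_sub_cancel, Nat.add_succ_sub_one]
    push_cast
    field_simp
    linear_combination (-(n + 1 : ℝ)) * x * cos x ^ n * hsin
  have hcont : Continuous fun x => x * cos x ^ (n + 2) := by fun_prop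
  have hcont' : Continuous fun x => (n + 1) / (n + 2) * (x * cos x ^ n) := by fun_prop
  have := intervalIntegral.integral_eq_sub_of_hasDerivAt hderiv
    ((hcont.sub hcont').intervalIntegrable _ _)
  rw [intervalIntegral.integral_sub (hcont.intervalIntegrable _ _) (hcont'.intervalIntegrable _ _),
    intervalIntegral.integral_const_mul] at this
  simp only [sin_pi, sin_zero, cos_pi, cos_zero, mul_zero, zero_div, zero_add, one_pow] at this
  rw [sub_eq_iff_eq_add] at this
  rw [this, pow_add]
  ring

theorem integral_mul_cos_pow_odd (m : ℕ) :
    ∫ x in 0..π, x * cos x ^ (2 * m + 1) =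
      -2 * (((2 * m + 1)! : ℝ) / ((2 * m + 1)‼ : ℝ) ^ 2 *
        ∑ j ∈ Finset.range (m + 1),
          ((2 * j - 1)‼ : ℝ) / ((2 * j)‼ : ℝ) * (1 / (2 * (j : ℝ) + 1))) := by
  induction m with
  | zero => simp [integral_mul_cos_eq_neg_two]
  | succ m ih =>
    have hfact : ((2 * (m + 1) + 1)! : ℝ) = (2 * m + 3) * (2 * m + 2) * (2 * m + 1)! := by
      rw [show 2 * (m + 1) + 1 = 2 * m + 1 + 1 + 1 by ring, Nat.factorial_succ, Nat.factorial_succ]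
      push_cast
      ring
    have hodd : ((2 * (m + 1) + 1)‼ : ℝ) = (2 * m + 3) * (2 * m + 1)‼ := by
      rw [show 2 * (m + 1) + 1 = 2 * m + 1 + 2 by ring, Nat.doubleFactorial_add_two]
      push_cast
      ring
    have heven : ((2 * (m + 1))‼ : ℝ) = (2 * m + 2) * (2 * m)‼ := by
      rw [show 2 * (m + 1) = 2 * m + 2 by ring, Nat.doubleFactorial_add_two]
      push_cast
      ring
    have hsplit : ((2 * m + 1)! : ℝ) = (2 * m + 1)‼ * (2 * m)‼ := by
      exact_mod_cast Nat.factorial_eq_mul_doubleFactorial (2 * m)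
    have h1 : ((2 * m + 1)‼ : ℝ) ≠ 0 := by positivity
    have h2 : ((2 * m)‼ : ℝ) ≠ 0 := by positivity
    rw [Finset.sum_range_succ _ (m + 1), hfact, hodd, heven,
      show 2 * (m + 1) - 1 = 2 * m + 1 by omega, show 2 * (m + 1) + 1 = 2 * m + 1 + 2 by ring,
      integral_mul_cos_pow_add_two, ih, hsplit, Odd.neg_one_pow ⟨m, rfl⟩]
    push_cast
    field_simp
    ring

theorem periodMean_abs_cos_pow_sub (n : ℕ) (x : ℝ) :
    periodMean (fun x y => |cos x ^ n - cos y ^ n|) (2 * π) x =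
      π⁻¹ * ∫ y in 0..π, |cos x ^ n - cos y ^ n| := by
  rw [periodMean, integral_comp_cos_zero_two_pi (f := fun c => |cos x ^ n - c ^ n|) (by fun_prop),
    mul_inv]
  ring

theorem integral_integral_abs_cos_pow_odd_sub (m : ℕ) :
    ∫ x in 0..π, ∫ y in 0..π, |cos x ^ (2 * m + 1) - cos y ^ (2 * m + 1)| =
      -4 * ∫ x in 0..π, x * cos x ^ (2 * m + 1) := by
  have hanti : AntitoneOn (fun x => cos x ^ (2 * m + 1)) (Set.Icc 0 π) :=
    (Odd.strictMono_pow ⟨m, rfl⟩).monotone.comp_antitoneOn antitoneOn_cos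
  have hzero : ∫ x in 0..π, cos x ^ (2 * m + 1) = 0 := by
    simpa using integral_sin_pow_mul_cos_pow_odd (a := 0) (b := π) 0 m
  rw [integral_integral_abs_sub_of_antitoneOn (by fun_prop) hanti pi_pos.le, hzero]
  ring

theorem area_odd_power_doubleFactorial_general (n : ℕ) (hn : Odd n) :
    Tendsto (fun k : ℕ => ∫ x in (0:ℝ)..π, |Real.cos x ^ n - Real.cos (k * x) ^ n|)
      atTop
      (𝓝 (8 / π * ((n.factorial : ℝ) / (Nat.doubleFactorial n : ℝ) ^ 2) *
        ∑ j ∈ Finset.range ((n - 1) / 2 + 1),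
          (Nat.doubleFactorial (2 * j - 1) : ℝ) / (Nat.doubleFactorial (2 * j) : ℝ) *
            (1 / (2 * (j : ℝ) + 1)))) := by
  obtain ⟨m, rfl⟩ := hn
  have hlip : ∀ y, LipschitzWith (2 * m + 1 : ℕ)
      fun x => |cos x ^ (2 * m + 1) - cos y ^ (2 * m + 1)| := fun y => by
    simpa [Real.dist_eq, Function.comp_def] using
      (LipschitzWith.dist_left _).comp (lipschitzWith_cos_pow (2 * m + 1))
  have hlim := tendsto_integral_comp_mul_of_periodic two_pi_pos (fun x => by fun_prop) hlip
    (fun x y => by simp only [cos_add_two_pi]) 0 π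
  rw [intervalIntegral.integral_congr fun x _ => periodMean_abs_cos_pow_sub _ x,
    intervalIntegral.integral_const_mul, integral_integral_abs_cos_pow_odd_sub,
    integral_mul_cos_pow_odd] at hlim
  rw [show (2 * m + 1 - 1) / 2 = m by omega]
  convert hlim using 2
  ring

theorem area_odd_power_doubleFactorial (n : ℕ) (hn : Odd n) (hpos : 0 < n) :
    Tendsto (fun k : ℕ => ∫ x in (0:ℝ)..π, |Real.cos x ^ n - Real.cos (k * x) ^ n|)
      atTop
      (𝓝 (8 / π * ((n.factorial : ℝ) / (Nat.doubleFactorial n : ℝ) ^ 2) *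
        ∑ j ∈ Finset.range ((n - 1) / 2 + 1),
          (Nat.doubleFactorial (2 * j - 1) : ℝ) / (Nat.doubleFactorial (2 * j) : ℝ) *
            (1 / (2 * (j : ℝ) + 1)))) :=
  area_odd_power_doubleFactorial_general n hn
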